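/- Let Ω be a domain in ℂ^n containing the origin 0, let φ be a plurisubharmonic function on Ω, and let s > t > -n be real numbers. Then for every real a > 0 one has c_s(max{φ, a·log‖z‖}) ≥ c_t(φ) + (s-t)/a. -/

import Mathlib

open MeasureTheory Filter Metric Topology Complex
open scoped ENNReal EReal

noncomputable section

/-- `ℂ^n` with its Euclidean (Hermitian) norm. -/
abbrev Cn (n : ℕ) : Type := EuclideanSpace ℂ (Fin n)

/-- Lebesgue measure on `ℂ^n ≅ ℝ^{2n}`. -/
instance Cn.measureSpace (n : ℕ) : MeasureSpace (Cn n) where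
  toMeasurableSpace := MeasurableSpace.comap (WithLp.ofLp (p := 2)) inferInstance
  volume := Measure.map (WithLp.toLp 2) (volume : Measure (Fin n → ℂ))

/-- Extended-real-valued logarithm, sending `0` (and negative numbers) to `-∞`. -/
def elog (x : ℝ) : EReal := if x ≤ 0 then (⊥ : EReal) else ((Real.log x : ℝ) : EReal)

/-- `exp : EReal → ℝ≥0∞`, with `exp (-∞) = 0` and `exp (+∞) = +∞`. -/
def erealExp (x : EReal) : ℝ≥0∞ :=
  if x = ⊤ then ⊤ else if x = ⊥ then 0 else ENNReal.ofReal (Real.exp x.toReal)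

/-- The positive part of an extended real number, as an element of `ℝ≥0∞`. -/
def erealPosPart (x : EReal) : ℝ≥0∞ := if x = ⊤ then ⊤ else ENNReal.ofReal x.toReal

/-- The integral of an `EReal`-valued function: upper integral of the positive part minus the
upper integral of the negative part. -/
def erealIntegral {α : Type*} [MeasurableSpace α] (μ : Measure α) (f : α → EReal) : EReal :=
  ((∫⁻ a, erealPosPart (f a) ∂μ : ℝ≥0∞) : EReal) -
    ((∫⁻ a, erealPosPart (-(f a)) ∂μ : ℝ≥0∞) : EReal)

/-- A function `f : ℂ → [-∞, ∞)` is subharmonic on an open set `U ⊆ ℂ` if it is upper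
semicontinuous on `U` and satisfies the sub-mean value inequality on circles contained in `U`
(written in the form `2π · f(z) ≤ ∫_0^{2π} f(z + r e^{iθ}) dθ`). -/
def SubhOn (f : ℂ → EReal) (U : Set ℂ) : Prop :=
  UpperSemicontinuousOn f U ∧
  ∀ z ∈ U, ∀ r : ℝ, 0 < r → closedBall z r ⊆ U →
    ((2 * Real.pi : ℝ) : EReal) * f z ≤
      erealIntegral (volume.restrict (Set.Ioc (0:ℝ) (2 * Real.pi)))
        (fun θ : ℝ => f (z + (r : ℂ) * Complex.exp (θ * Complex.I)))

/-- A function `φ : ℂ^n → [-∞, ∞)` is plurisubharmonic on `Ω` if it is upper semicontinuous on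
`Ω`, not identically `-∞`, never `+∞`, and its restriction to every complex line is subharmonic. -/
def PshOn {n : ℕ} (φ : Cn n → EReal) (Ω : Set (Cn n)) : Prop :=
  UpperSemicontinuousOn φ Ω ∧ (∃ z ∈ Ω, φ z ≠ ⊥) ∧ (∀ z ∈ Ω, φ z ≠ ⊤) ∧
  ∀ a v : Cn n, SubhOn (fun w : ℂ => φ (a + w • v)) {w : ℂ | a + w • v ∈ Ω}

/-- A domain in `ℂ^n`: a nonempty connected open set. -/
def IsCnDomain {n : ℕ} (Ω : Set (Cn n)) : Prop := IsOpen Ω ∧ IsConnected Ω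

/-- The Lelong number of `φ` at the origin: `ν_φ(0) = liminf_{z → 0} φ(z) / log ‖z‖`. -/
def lelong {n : ℕ} (φ : Cn n → EReal) : EReal :=
  liminf (fun z : Cn n => φ z * (((Real.log ‖z‖)⁻¹ : ℝ) : EReal)) (𝓝[≠] (0 : Cn n))

/-- The Lelong number at `0` of the restriction of `φ` to the complex line through `0` with
direction `v`: `ν_{φ|_l}(0) = liminf_{λ → 0} φ(λ v) / log |λ|`. -/
def lelongLine {n : ℕ} (φ : Cn n → EReal) (v : Cn n) : EReal :=
  liminf (fun w : ℂ => φ (w • v) * (((Real.log ‖w‖)⁻¹ : ℝ) : EReal)) (𝓝[≠] (0 : ℂ))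

/-- `‖z‖^{2t} e^{-2cφ}` is (Lebesgue) integrable on some neighborhood of the origin. -/
def lctIntegrable {n : ℕ} (t c : ℝ) (φ : Cn n → EReal) : Prop :=
  ∃ U ∈ 𝓝 (0 : Cn n),
    (∫⁻ z in U, ENNReal.ofReal (‖z‖ ^ (2 * t)) *
        erealExp (((-(2 * c) : ℝ) : EReal) * φ z) ∂volume) < ⊤

/-- The weighted log canonical threshold
`c_t(φ) = sup {c ≥ 0 : ‖z‖^{2t} e^{-2cφ}` is integrable near `0}`, as an element of `[0, ∞]`. -/
def lct {n : ℕ} (t : ℝ) (φ : Cn n → EReal) : ℝ≥0∞ :=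
  ⨆ c ∈ {c : ℝ | 0 ≤ c ∧ lctIntegrable t c φ}, ENNReal.ofReal c

/-! Put `ψ = max{φ, a log‖z‖}` and `d = (s - t)/a`. Since `ψ ≥ φ` and `ψ ≥ a log‖z‖`, for `c ≥ 0`
`‖z‖^{2s} e^{-2(c+d)ψ} = ‖z‖^{2s} e^{-2cψ} e^{-2dψ} ≤ ‖z‖^{2s} e^{-2cφ} ‖z‖^{-2(s-t)} = ‖z‖^{2t} e^{-2cφ}`,
so every exponent `c` admissible for `c_t(φ)` makes `c + d` admissible for `c_s(ψ)`. The exponent `0` is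
admissible for `c_t(φ)` because `‖z‖^{2t}` is integrable near the origin of `ℝ^{2n}` when `2t > -2n`. -/

open Set

instance Cn.borelSpace (n : ℕ) : BorelSpace (Cn n) := PiLp.borelSpace 2

instance Cn.isAddHaarMeasure (n : ℕ) : (volume : Measure (Cn n)).IsAddHaarMeasure :=
  (PiLp.continuousLinearEquiv 2 ℂ (fun _ : Fin n => ℂ)).symm.isAddHaarMeasure_map volume

lemma Cn.finrank_real (n : ℕ) : Module.finrank ℝ (Cn n) = 2 * n := by
  rw [← Module.finrank_mul_finrank ℝ ℂ (Cn n), finrank_euclideanSpace_fin,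
    Complex.finrank_real_complex]

section

variable {E : Type*} [NormedAddCommGroup E] [NormedSpace ℝ E] [FiniteDimensional ℝ E]
  [MeasurableSpace E] [BorelSpace E] {μ : Measure E} [μ.IsAddHaarMeasure]

lemma integrableOn_ball_rpow_norm {p : ℝ} (hp : -(Module.finrank ℝ E : ℝ) < p) (r : ℝ) :
    IntegrableOn (fun x : E => ‖x‖ ^ p) (ball 0 r) μ := by
  rcases le_or_gt 0 p with hp0 | hp0
  · exact ((continuous_norm.rpow_const fun _ => Or.inr hp0).continuousOn.integrableOn_compact
      (isCompact_closedBall 0 r)).mono_set ball_subset_closedBall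
  · have hE : 1 ≤ Module.finrank ℝ E := by
      by_contra! h
      simp only [Nat.lt_one_iff.1 h, CharP.cast_eq_zero, neg_zero] at hp
      linarith
    refine integrableOn_ball_of_norm_le_rpow (C := 1) (α := -p) hE (by linarith) ?_
      (by fun_prop : Measurable fun x : E => ‖x‖ ^ p).aestronglyMeasurable
    refine Eventually.of_forall fun x => ?_
    rw [neg_neg, one_mul, Real.norm_of_nonneg (Real.rpow_nonneg (norm_nonneg x) p)]

end

lemma elog_of_pos {x : ℝ} (hx : 0 < x) : elog x = (Real.log x : EReal) := if_neg hx.not_ge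

lemma erealExp_coe (x : ℝ) : erealExp x = ENNReal.ofReal (Real.exp x) := by
  simp [erealExp]

lemma erealExp_bot : erealExp ⊥ = 0 := by simp [erealExp]

lemma erealExp_zero : erealExp 0 = 1 := by
  simpa using erealExp_coe 0

lemma erealExp_mono : Monotone erealExp := by
  intro x y hxy
  induction x using EReal.rec with
  | bot => simp [erealExp_bot]
  | top => rw [top_le_iff.1 hxy]
  | coe x =>
    induction y using EReal.rec with
    | bot => simp at hxy
    | top => simp [erealExp]
    | coe y =>
      rw [erealExp_coe, erealExp_coe]
      exact ENNReal.ofReal_le_ofReal (Real.exp_le_exp.2 (EReal.coe_le_coe_iff.1 hxy))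

lemma rpow_mul_exp_le_of_mul_log_le {r a c d s t m : ℝ} (hr : 0 < r) (hd : 0 ≤ d)
    (hda : d * a = s - t) (hm : a * Real.log r ≤ m) :
    r ^ (2 * s) * Real.exp (-(2 * (c + d)) * m) ≤ r ^ (2 * t) * Real.exp (-(2 * c) * m) := by
  have hsplit : r ^ (2 * s) = r ^ (2 * t) * Real.exp (2 * d * (a * Real.log r)) := by
    rw [Real.rpow_def_of_pos hr, Real.rpow_def_of_pos hr, ← Real.exp_add]
    congr 1
    linear_combination (-2 * Real.log r) * hda
  rw [hsplit, mul_assoc, ← Real.exp_add]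
  gcongr
  nlinarith [mul_le_mul_of_nonneg_left hm hd]

lemma ofReal_rpow_mul_erealExp_le {r a c d s t : ℝ} {M : EReal} (hr : 0 < r) (hc : 0 ≤ c)
    (hd : 0 < d) (hda : d * a = s - t) (hM : ((a * Real.log r : ℝ) : EReal) ≤ M) :
    ENNReal.ofReal (r ^ (2 * s)) * erealExp (((-(2 * (c + d)) : ℝ) : EReal) * M)
      ≤ ENNReal.ofReal (r ^ (2 * t)) * erealExp (((-(2 * c) : ℝ) : EReal) * M) := by
  induction M using EReal.rec with
  | bot => exact absurd (le_bot_iff.1 hM) (EReal.coe_ne_bot _)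
  | top =>
    rw [EReal.coe_mul_top_of_neg (by linarith), erealExp_bot, mul_zero]
    exact bot_le
  | coe m =>
    simp only [← EReal.coe_mul, erealExp_coe]
    rw [← ENNReal.ofReal_mul (by positivity), ← ENNReal.ofReal_mul (by positivity)]
    exact ENNReal.ofReal_le_ofReal
      (rpow_mul_exp_le_of_mul_log_le hr hd.le hda (EReal.coe_le_coe_iff.1 hM))

lemma ofReal_rpow_mul_erealExp_max_le {r a c d s t : ℝ} (x : EReal) (hr : 0 < r) (hc : 0 ≤ c)
    (hd : 0 < d) (hda : d * a = s - t) :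
    ENNReal.ofReal (r ^ (2 * s)) *
        erealExp (((-(2 * (c + d)) : ℝ) : EReal) * max x ((a * Real.log r : ℝ) : EReal))
      ≤ ENNReal.ofReal (r ^ (2 * t)) * erealExp (((-(2 * c) : ℝ) : EReal) * x) := by
  refine (ofReal_rpow_mul_erealExp_le hr hc hd hda (le_max_right _ _)).trans ?_
  gcongr
  refine erealExp_mono ?_
  rw [mul_comm _ x, mul_comm]
  exact EReal.mul_le_mul_of_nonpos_right (le_max_left _ _) (by exact_mod_cast (by linarith))

lemma lctIntegrable_zero_of_neg_lt {n : ℕ} {t : ℝ} (ht : -(n : ℝ) < t) (φ : Cn n → EReal) :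
    lctIntegrable t 0 φ := by
  refine ⟨ball 0 1, ball_mem_nhds _ one_pos, ?_⟩
  simp only [mul_zero, neg_zero, EReal.coe_zero, zero_mul, erealExp_zero, mul_one]
  refine (integrableOn_ball_rpow_norm ?_ 1).lintegral_lt_top
  rw [Cn.finrank_real]
  push_cast
  linarith

lemma lctIntegrable.max_mul_elog {n : ℕ} {φ : Cn n → EReal} {s t a c : ℝ} (hst : t < s)
    (ht : -(n : ℝ) < t) (ha : 0 < a) (hc : 0 ≤ c) (h : lctIntegrable t c φ) :
    lctIntegrable s (c + (s - t) / a) (fun z => max (φ z) ((a : EReal) * elog ‖z‖)) := by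
  obtain ⟨U, hU, hint⟩ := h
  have hd : 0 < (s - t) / a := div_pos (sub_pos.2 hst) ha
  have hda : (s - t) / a * a = s - t := div_mul_cancel₀ _ ha.ne'
  -- `‖z‖ ^ (2 * s)` vanishes at `z = 0` unless `s = 0`, and then `n > 0`, so that `{0}` is null
  have hae : ∀ᵐ z : Cn n, z ≠ 0 ∨ s ≠ 0 := by
    rcases eq_or_ne s 0 with rfl | hs
    · have : Nonempty (Fin n) := ⟨⟨0, by exact_mod_cast (by linarith : (0 : ℝ) < n)⟩⟩
      exact (Measure.ae_ne volume 0).mono fun _ => Or.inl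
    · exact .of_forall fun _ => Or.inr hs
  refine ⟨U, hU, lt_of_le_of_lt (lintegral_mono_ae (ae_restrict_of_ae ?_)) hint⟩
  filter_upwards [hae] with z hz
  rcases eq_or_ne z 0 with rfl | hz0
  · have hs : 2 * s ≠ 0 := mul_ne_zero two_ne_zero (hz.resolve_left (not_not.2 rfl))
    simp [Real.zero_rpow hs]
  · have hr : 0 < ‖z‖ := norm_pos_iff.2 hz0
    rw [elog_of_pos hr, ← EReal.coe_mul]
    exact ofReal_rpow_mul_erealExp_max_le _ hr hc hd hda

lemma lct_add_le_lct {n : ℕ} {φ ψ : Cn n → EReal} {s t d : ℝ} (hd : 0 ≤ d)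
    (h0 : lctIntegrable t 0 φ) (h : ∀ c, 0 ≤ c → lctIntegrable t c φ → lctIntegrable s (c + d) ψ) :
    lct t φ + ENNReal.ofReal d ≤ lct s ψ := by
  have hne : {c : ℝ | 0 ≤ c ∧ lctIntegrable t c φ}.Nonempty := ⟨0, le_rfl, h0⟩
  rw [lct, ENNReal.biSup_add hne]
  refine iSup₂_le fun c hc => ?_
  rw [← ENNReal.ofReal_add hc.1 hd]
  exact le_biSup (fun c : ℝ => ENNReal.ofReal c) ⟨add_nonneg hc.1 hd, h c hc.1 hc.2⟩

theorem statement9_general {n : ℕ} (φ : Cn n → EReal)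
    (s t : ℝ) (hst : t < s) (ht : -(n : ℝ) < t) (a : ℝ) (ha : 0 < a) :
    lct t φ + ENNReal.ofReal ((s - t) / a)
      ≤ lct s (fun z : Cn n => max (φ z) ((a : EReal) * elog ‖z‖)) :=
  lct_add_le_lct (div_pos (sub_pos.2 hst) ha).le (lctIntegrable_zero_of_neg_lt ht φ)
    fun _ hc h => h.max_mul_elog hst ht ha hc

/-- For `s > t > -n` and any `a > 0`:
`c_s(max{φ, a log‖z‖}) ≥ c_t(φ) + (s-t)/a` (in `[0,∞]`). -/
theorem statement9 {n : ℕ} (hn : 0 < n) (Ω : Set (Cn n)) (hΩ : IsCnDomain Ω)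
    (h0 : (0 : Cn n) ∈ Ω) (φ : Cn n → EReal) (hφ : PshOn φ Ω)
    (s t : ℝ) (hst : t < s) (ht : -(n : ℝ) < t) (a : ℝ) (ha : 0 < a) :
    lct t φ + ENNReal.ofReal ((s - t) / a)
      ≤ lct s (fun z : Cn n => max (φ z) ((a : EReal) * elog ‖z‖)) :=
  statement9_general φ s t hst ht a ha

end
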